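/- Let α > 1, r > 0, σ ≥ 0, and ℓ < 0. For real n > 1 define N₁(n) := ∑_{k=1}^∞ k^{−1−2rα}/(1 + n^{ℓ}·k^{−α})², N₂(n) := n^{2ℓ−1} ∑_{k=1}^∞ k^{−2α}/(1 + n^{ℓ}·k^{−α})², and ε(n) := (N₁(n) + σ²·N₂(n))/(1 − N₂(n)). Then ε(n) converges to ∑_{k=1}^∞ k^{−1−2rα} as n → ∞; in particular ε(n) = Θ(1). -/

import Mathlib

open Filter Real

lemma summable_pnat_rpow_aux {p : ℝ} (hp : p < -1) :
    Summable (fun k : ℕ+ => (k : ℝ) ^ p) := by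
  have h := (Real.summable_nat_rpow (p := p)).mpr hp
  exact h.comp_injective PNat.coe_injective

/-- Sample-variance sum `N₁(n) = ∑_{k≥1} k^{-1-2rα}/(1+n^ℓ k^{-α})²`. -/
noncomputable def sampleVarGrow (α r ℓ n : ℝ) : ℝ :=
  ∑' k : ℕ+, (k : ℝ) ^ (-1 - 2 * r * α) / (1 + n ^ ℓ * (k : ℝ) ^ (-α)) ^ 2

/-- Noise-variance sum `N₂(n) = n^{2ℓ-1} ∑_{k≥1} k^{-2α}/(1+n^ℓ k^{-α})²`. -/
noncomputable def noiseVarGrow (α ℓ n : ℝ) : ℝ :=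
  n ^ (2 * ℓ - 1) * ∑' k : ℕ+, (k : ℝ) ^ (-2 * α) / (1 + n ^ ℓ * (k : ℝ) ^ (-α)) ^ 2

/-- Closed-form excess error `ε(n) = (N₁(n) + σ²N₂(n))/(1 − N₂(n))`. -/
noncomputable def excessErrGrow (α r ℓ σ n : ℝ) : ℝ :=
  (sampleVarGrow α r ℓ n + σ ^ 2 * noiseVarGrow α ℓ n) / (1 - noiseVarGrow α ℓ n)

/-- when the regularization grows with n (ℓ < 0), the closed-form excess
error converges to `∑_{k≥1} k^{-1-2rα}` as n → ∞; in particular it is Θ(1). -/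
theorem excess_error_growing_regularization (α r ℓ σ : ℝ)
    (hα : 1 < α) (hr : 0 < r) (hσ : 0 ≤ σ) (hℓ : ℓ < 0) :
    Filter.Tendsto (fun n : ℝ => excessErrGrow α r ℓ σ n) Filter.atTop
      (nhds (∑' k : ℕ+, (k : ℝ) ^ (-1 - 2 * r * α))) ∧
    ∃ c C n₀ : ℝ, 0 < c ∧ c ≤ C ∧ 0 < n₀ ∧ ∀ n : ℝ, n₀ ≤ n →
      c ≤ excessErrGrow α r ℓ σ n ∧ excessErrGrow α r ℓ σ n ≤ C := by
  have hkpos : ∀ k : ℕ+, (0:ℝ) < (k:ℝ) := fun k => by exact_mod_cast k.pos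
  have hp1 : (-1 - 2 * r * α : ℝ) < -1 := by nlinarith
  have hp2 : (-2 * α : ℝ) < -1 := by nlinarith
  have hsum1 : Summable (fun k : ℕ+ => (k : ℝ) ^ (-1 - 2 * r * α)) :=
    summable_pnat_rpow_aux hp1
  have hsum2 : Summable (fun k : ℕ+ => (k : ℝ) ^ (-2 * α)) :=
    summable_pnat_rpow_aux hp2
  -- n^ℓ → 0
  have hn0 : Tendsto (fun n : ℝ => n ^ ℓ) atTop (nhds 0) := by
    have := tendsto_rpow_neg_atTop (y := -ℓ) (by linarith)
    simpa using this
  -- denominator ≥ 1 for n ≥ 1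
  have hden : ∀ n : ℝ, 1 ≤ n → ∀ k : ℕ+,
      1 ≤ (1 + n ^ ℓ * (k : ℝ) ^ (-α)) ^ 2 := by
    intro n hn k
    have h1 : (0:ℝ) ≤ n ^ ℓ * (k : ℝ) ^ (-α) := by positivity
    nlinarith
  -- pointwise convergence of terms
  have hpt : ∀ (p : ℝ) (k : ℕ+),
      Tendsto (fun n : ℝ => (k : ℝ) ^ p / (1 + n ^ ℓ * (k : ℝ) ^ (-α)) ^ 2)
        atTop (nhds ((k : ℝ) ^ p)) := by
    intro p k
    have hd : Tendsto (fun n : ℝ => (1 + n ^ ℓ * (k : ℝ) ^ (-α)) ^ 2) atTop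
        (nhds ((1 + 0 * (k : ℝ) ^ (-α)) ^ 2)) :=
      (((hn0.mul_const _).const_add 1).pow 2)
    have hd' : Tendsto (fun n : ℝ => (1 + n ^ ℓ * (k : ℝ) ^ (-α)) ^ 2) atTop
        (nhds 1) := by simpa using hd
    have := (tendsto_const_nhds (x := (k : ℝ) ^ p) (f := atTop)).div hd' one_ne_zero
    simpa [Pi.div_def] using this
  -- N₁ → S
  have hN1 : Tendsto (fun n : ℝ => sampleVarGrow α r ℓ n) atTop
      (nhds (∑' k : ℕ+, (k : ℝ) ^ (-1 - 2 * r * α))) := by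
    apply tendsto_tsum_of_dominated_convergence hsum1 (hpt _)
    filter_upwards [eventually_ge_atTop (1:ℝ)] with n hn k
    have hD := hden n hn k
    have hc : (0:ℝ) ≤ (k : ℝ) ^ (-1 - 2 * r * α) := by positivity
    rw [Real.norm_eq_abs, abs_of_nonneg (by positivity)]
    exact div_le_self hc hD
  -- bound for second tsum
  have htsum2_le : ∀ n : ℝ, 1 ≤ n →
      (∑' k : ℕ+, (k : ℝ) ^ (-2*α) / (1 + n ^ ℓ * (k : ℝ) ^ (-α)) ^ 2)
        ≤ ∑' k : ℕ+, (k : ℝ) ^ (-2*α) := by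
    intro n hn
    refine Summable.tsum_le_tsum (fun k => ?_) ?_ hsum2
    · exact div_le_self (by positivity) (hden n hn k)
    · refine hsum2.of_nonneg_of_le (fun k => by positivity)
        (fun k => div_le_self (by positivity) (hden n hn k))
  -- N₂ → 0
  have hN2 : Tendsto (fun n : ℝ => noiseVarGrow α ℓ n) atTop (nhds 0) := by
    have hup : Tendsto (fun n : ℝ => n ^ (2*ℓ-1) * ∑' k : ℕ+, (k : ℝ) ^ (-2*α))
        atTop (nhds 0) := by
      have h := tendsto_rpow_neg_atTop (y := -(2*ℓ-1)) (by linarith)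
      have h' : Tendsto (fun n : ℝ => n ^ (2*ℓ-1)) atTop (nhds 0) := by simpa using h
      simpa using h'.mul_const _
    refine tendsto_of_tendsto_of_tendsto_of_le_of_le' tendsto_const_nhds hup ?_ ?_
    · filter_upwards [eventually_ge_atTop (1:ℝ)] with n hn
      have h0 : (0:ℝ) ≤ ∑' k : ℕ+, (k : ℝ) ^ (-2*α) / (1 + n ^ ℓ * (k : ℝ) ^ (-α)) ^ 2 :=
        tsum_nonneg (fun k => by positivity)
      have : (0:ℝ) ≤ n ^ (2*ℓ-1) := by positivity
      exact mul_nonneg this h0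
    · filter_upwards [eventually_ge_atTop (1:ℝ)] with n hn
      have : (0:ℝ) ≤ n ^ (2*ℓ-1) := by positivity
      exact mul_le_mul_of_nonneg_left (htsum2_le n hn) this
  set S := ∑' k : ℕ+, (k : ℝ) ^ (-1 - 2 * r * α) with hSdef
  have hfull : Tendsto (fun n : ℝ => excessErrGrow α r ℓ σ n) atTop (nhds S) := by
    have hnum : Tendsto (fun n : ℝ => sampleVarGrow α r ℓ n + σ^2 * noiseVarGrow α ℓ n)
        atTop (nhds (S + σ^2 * 0)) := hN1.add (hN2.const_mul _)
    have hden' : Tendsto (fun n : ℝ => 1 - noiseVarGrow α ℓ n) atTop (nhds (1 - 0)) :=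
      tendsto_const_nhds.sub hN2
    have := hnum.div hden' (by norm_num)
    simpa [excessErrGrow, Pi.div_def] using this
  refine ⟨hfull, ?_⟩
  have hSpos : 0 < S := by
    refine Summable.tsum_pos hsum1 (fun k => by positivity) 1 ?_
    have : ((1 : ℕ+) : ℝ) = 1 := by norm_num
    rw [this]; positivity
  have hev := (Metric.tendsto_nhds.mp hfull) (S/2) (by positivity)
  rw [eventually_atTop] at hev
  obtain ⟨a, ha⟩ := hev
  refine ⟨S/2, S + S/2, max a 1, by positivity, by linarith, by positivity, ?_⟩
  intro n hn
  have h := ha n (le_trans (le_max_left a 1) hn)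
  rw [Real.dist_eq, abs_sub_lt_iff] at h
  constructor <;> linarith [h.1, h.2]
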